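/- Let n ≥ 1. For all integers m ≥ 0 and 1 ≤ i ≤ n+1, one has ϖ^{2+m}·Matₙ(R) ⊆ Π^{i+nm}·𝔦 as subsets of Matₙ(R). Consequently the congruence subgroup {1 + x : x ∈ ϖ^{2+m}Matₙ(R)} of GLₙ(R) is contained in the subgroup {1 + y : y ∈ Π^{i+nm}𝔦}. -/

import Mathlib

open IsLocalRing

variable (R : Type*) [CommRing R] [IsDomain R] [IsDiscreteValuationRing R]

/-- The Iwahori order `𝔦`, as a set: matrices over `R` whose entries strictly below the
diagonal lie in the maximal ideal `𝔪`. -/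
def iw (n : ℕ) : Set (Matrix (Fin n) (Fin n) R) :=
  {M | ∀ i j : Fin n, (j : ℕ) < (i : ℕ) → M i j ∈ maximalIdeal R}

/-- The unit group `U_𝔦` of the Iwahori order: matrices `u ∈ 𝔦` invertible with
inverse in `𝔦`. -/
def Uiw (n : ℕ) : Set (Matrix (Fin n) (Fin n) R) :=
  {u | u ∈ iw R n ∧ ∃ v ∈ iw R n, u * v = 1 ∧ v * u = 1}

/-- The matrix `Π`, with `(i, i+1)`-entries `1`, `(n,1)`-entry `ϖ` and all other
entries `0`. -/
def PiMat (ϖ : R) (n : ℕ) : Matrix (Fin n) (Fin n) R :=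
  Matrix.of fun i j => if (j : ℕ) = (i : ℕ) + 1 then 1
    else if (i : ℕ) = n - 1 ∧ (j : ℕ) = 0 then ϖ else 0

/-!
Multiplying by `Π` on the left shifts rows up cyclically, multiplying the wrapped-around row
by `ϖ`; hence `(Π^k)ᵢⱼ = ϖ^⌊(i+k)/n⌋` when `j ≡ i + k (mod n)` and `0` otherwise. In particular
`Π^n = ϖ`, so `ϖ^{2+m} B = Π^{i+nm} (Π^{2n-i} B)`, and every row `a ≥ 1` of `Π^{2n-i}` lies in
`𝔪` because `a + 2n - i ≥ n`; so `Π^{2n-i} B` lies in `𝔦`.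
-/

section Shift

variable {R : Type*} [CommRing R] {ϖ : R} {n : ℕ}

lemma piMat_mul_apply (M : Matrix (Fin n) (Fin n) R) (i j : Fin n) :
    (PiMat R ϖ n * M) i j =
      if h : (i : ℕ) + 1 < n then M ⟨i + 1, h⟩ j else ϖ * M ⟨0, i.pos⟩ j := by
  rw [Matrix.mul_apply]
  split_ifs with h
  · rw [Finset.sum_eq_single ⟨i + 1, h⟩]
    · simp [PiMat]
    · intro s _ hs
      have : (s : ℕ) ≠ i + 1 := fun e => hs (Fin.ext e)
      rw [PiMat, Matrix.of_apply, if_neg this, if_neg (by omega), zero_mul]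
    · simp
  · rw [Finset.sum_eq_single ⟨0, i.pos⟩]
    · rw [PiMat, Matrix.of_apply, if_neg (Nat.succ_ne_zero _).symm, if_pos ⟨by omega, rfl⟩]
    · intro s _ hs
      have : (s : ℕ) ≠ 0 := fun e => hs (Fin.ext e)
      rw [PiMat, Matrix.of_apply, if_neg (by omega), if_neg (by omega), zero_mul]
    · simp

lemma piMat_pow_apply (k : ℕ) (i j : Fin n) :
    (PiMat R ϖ n ^ k) i j = if ((i : ℕ) + k) % n = j then ϖ ^ (((i : ℕ) + k) / n) else 0 := by
  induction k generalizing i with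
  | zero => simp [Matrix.one_apply, Nat.mod_eq_of_lt i.isLt, Nat.div_eq_of_lt i.isLt, Fin.ext_iff]
  | succ k ih =>
    rw [pow_succ', piMat_mul_apply]
    by_cases h : (i : ℕ) + 1 < n
    · rw [dif_pos h, ih, Nat.add_right_comm, Nat.add_assoc]
    · have hi : (i : ℕ) + (k + 1) = k + n := by omega
      rw [dif_neg h, ih, hi, Nat.add_mod_right, Nat.add_div_right _ i.pos, Nat.zero_add, mul_ite,
        mul_zero, pow_succ']

lemma piMat_pow_mul (t : ℕ) : PiMat R ϖ n ^ (n * t) = ϖ ^ t • (1 : Matrix (Fin n) (Fin n) R) := by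
  ext i j
  rw [piMat_pow_apply, Nat.add_mul_mod_self_left, Nat.mod_eq_of_lt i.isLt,
    Nat.add_mul_div_left _ _ i.pos, Nat.div_eq_of_lt i.isLt, Nat.zero_add]
  simp [Matrix.one_apply, Fin.ext_iff]

lemma piMat_pow_apply_mem {I : Ideal R} (hϖ : ϖ ∈ I) {k : ℕ} {i : Fin n} (h : n ≤ (i : ℕ) + k)
    (j : Fin n) : (PiMat R ϖ n ^ k) i j ∈ I := by
  rw [piMat_pow_apply]
  split_ifs
  · obtain ⟨q, hq⟩ := Nat.exists_eq_add_of_le' ((Nat.one_le_div_iff i.pos).mpr h)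
    rw [hq, pow_succ]
    exact I.mul_mem_left _ hϖ
  · exact zero_mem I

end Shift

variable {R}

lemma piMat_pow_mul_mem_iw {ϖ : R} (hϖ : ϖ ∈ maximalIdeal R) {n k : ℕ} (hk : n ≤ k + 1)
    (B : Matrix (Fin n) (Fin n) R) : PiMat R ϖ n ^ k * B ∈ iw R n := by
  intro a b hba
  rw [Matrix.mul_apply]
  exact Ideal.sum_mem _ fun s _ => Ideal.mul_mem_right _ _ (piMat_pow_apply_mem hϖ (by omega) s)

lemma pow_smul_mem_piMat_pow_mul_iw {ϖ : R} (hϖ : ϖ ∈ maximalIdeal R) {n m i : ℕ}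
    (hi : i ≤ n + 1) (B : Matrix (Fin n) (Fin n) R) :
    ϖ ^ (2 + m) • B ∈ (fun x => PiMat R ϖ n ^ (i + n * m) * x) '' iw R n := by
  rcases Nat.eq_zero_or_pos n with rfl | hn
  · exact ⟨0, fun a => a.elim0, Subsingleton.elim _ _⟩
  refine ⟨PiMat R ϖ n ^ (2 * n - i) * B, piMat_pow_mul_mem_iw hϖ (by omega) B, ?_⟩
  have hexp : i + n * m + (2 * n - i) = n * (2 + m) := by
    rw [Nat.mul_add]
    omega
  simp only [← mul_assoc, ← pow_add, hexp, piMat_pow_mul, Matrix.smul_mul, Matrix.one_mul]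

theorem scalar_pow_matR_subset_piPow_iwahori_general (ϖ : R)
    (hϖ : Ideal.span {ϖ} = maximalIdeal R)
    (n : ℕ) (m : ℕ) (i : ℕ) (hi2 : i ≤ n + 1) :
    ({A : Matrix (Fin n) (Fin n) R | ∃ B : Matrix (Fin n) (Fin n) R, A = ϖ ^ (2 + m) • B} ⊆
      (fun x => (PiMat R ϖ n) ^ (i + n * m) * x) '' iw R n) ∧
    ({A : Matrix (Fin n) (Fin n) R |
        ∃ x : Matrix (Fin n) (Fin n) R,
          (∃ B : Matrix (Fin n) (Fin n) R, x = ϖ ^ (2 + m) • B) ∧ A = 1 + x} ⊆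
      {A : Matrix (Fin n) (Fin n) R |
        ∃ y ∈ (fun x => (PiMat R ϖ n) ^ (i + n * m) * x) '' iw R n, A = 1 + y}) := by
  have hϖm : ϖ ∈ maximalIdeal R := hϖ ▸ Ideal.mem_span_singleton_self ϖ
  have hscalar : {A : Matrix (Fin n) (Fin n) R | ∃ B, A = ϖ ^ (2 + m) • B} ⊆
      (fun x => PiMat R ϖ n ^ (i + n * m) * x) '' iw R n := by
    rintro _ ⟨B, rfl⟩
    exact pow_smul_mem_piMat_pow_mul_iw hϖm hi2 B
  refine ⟨hscalar, ?_⟩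
  rintro _ ⟨x, hx, rfl⟩
  exact ⟨x, hscalar hx, rfl⟩

/-- For all `m ≥ 0` and `1 ≤ i ≤ n+1` one has
`ϖ^{2+m}·Matₙ(R) ⊆ Π^{i+nm}·𝔦`; consequently the congruence subgroup
`1 + ϖ^{2+m}Matₙ(R)` is contained in `1 + Π^{i+nm}𝔦`. -/
theorem scalar_pow_matR_subset_piPow_iwahori (ϖ : R)
    (hϖ : Ideal.span {ϖ} = maximalIdeal R)
    (n : ℕ) (hn : 1 ≤ n) (m : ℕ) (i : ℕ) (hi1 : 1 ≤ i) (hi2 : i ≤ n + 1) :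
    ({A : Matrix (Fin n) (Fin n) R | ∃ B : Matrix (Fin n) (Fin n) R, A = ϖ ^ (2 + m) • B} ⊆
      (fun x => (PiMat R ϖ n) ^ (i + n * m) * x) '' iw R n) ∧
    ({A : Matrix (Fin n) (Fin n) R |
        ∃ x : Matrix (Fin n) (Fin n) R,
          (∃ B : Matrix (Fin n) (Fin n) R, x = ϖ ^ (2 + m) • B) ∧ A = 1 + x} ⊆
      {A : Matrix (Fin n) (Fin n) R |
        ∃ y ∈ (fun x => (PiMat R ϖ n) ^ (i + n * m) * x) '' iw R n, A = 1 + y}) :=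
  scalar_pow_matR_subset_piPow_iwahori_general ϖ hϖ n m i hi2
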